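/- arXiv:1111.0682 — 4 statements merged into one kernel-verified Lean document; each statement's English description precedes it below -/
import Mathlib

section
/- Let f(z) be a Laurent series in U((z)) for a vector space U, and g(w) ∈ c·w + w²·ℂ[[w]] with c ≠ 0. Then Res_z f(z) dz = Res_w f(g(w)) ∂_w g(w) dw, where Res denotes the coefficient of z^{-1} (resp. w^{-1}). -/
/-!
Both sides are linear in `f`, so everything reduces to `Res_w g(w)ⁿ g'(w) dw = δₙ,₋₁`.
Write `g = X * u` with `u` a unit and `v = u⁻¹`. For `n ≥ 0` the series `gⁿ g'` has no
negative powers. For `n = -(k + 1)` the residue is the `k`-th coefficient of `vᵏ⁺¹ (X u)'`,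
which is `1` for `k = 0`; for `k > 0`, `k • vᵏ⁺¹ (X u)' = k vᵏ - X (vᵏ)'` and the Euler
operator `X d/dX` multiplies the `k`-th coefficient by `k`, so this coefficient vanishes.
-/

open PowerSeries LaurentSeries HahnSeries

namespace PowerSeries

variable {R : Type*} [CommRing R]

theorem coeff_X_mul_derivative (p : R⟦X⟧) (n : ℕ) :
    coeff n (X * d⁄dX R p) = n * coeff n p := by
  cases n with
  | zero => simp
  | succ m => rw [coeff_succ_X_mul, coeff_derivative, mul_comm, Nat.cast_succ]

variable {u v : R⟦X⟧}

theorem derivative_pow_of_mul_eq_one (h : v * u = 1) (k : ℕ) :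
    d⁄dX R (v ^ k) = -(k * v ^ (k + 1) * d⁄dX R u) := by
  have hv : d⁄dX R v = -(v ^ 2 * d⁄dX R u) := by
    have h' := congrArg (d⁄dX R) h
    rw [Derivation.leibniz, derivative_one, smul_eq_mul, smul_eq_mul] at h'
    linear_combination v * h' - d⁄dX R v * h
  cases k with
  | zero => simp
  | succ k => rw [derivative_pow, hv]; push_cast; ring

theorem natCast_mul_pow_succ_mul_derivative_X_mul (h : v * u = 1) (k : ℕ) :
    (k : R⟦X⟧) * (v ^ (k + 1) * d⁄dX R (X * u)) = (k : R⟦X⟧) * v ^ k - X * d⁄dX R (v ^ k) := by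
  rw [derivative_pow_of_mul_eq_one h, Derivation.leibniz, derivative_X, smul_eq_mul, smul_eq_mul]
  linear_combination (k * v ^ k) * h

theorem coeff_pow_succ_mul_derivative_X_mul [IsAddTorsionFree R] (h : v * u = 1) (k : ℕ) :
    coeff k (v ^ (k + 1) * d⁄dX R (X * u)) = if k = 0 then 1 else 0 := by
  split_ifs with hk
  · subst hk
    simpa [Derivation.leibniz] using congrArg constantCoeff h
  · have hkc := congrArg (coeff k) (natCast_mul_pow_succ_mul_derivative_X_mul h k)
    rw [map_sub, coeff_X_mul_derivative, ← map_natCast (C (R := R)), coeff_C_mul, coeff_C_mul,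
      sub_self, ← nsmul_eq_mul] at hkc
    exact nsmul_right_injective hk (by simpa using hkc)

theorem exists_unit_eq_X_mul {K : Type*} [Field K] {g : K⟦X⟧} (hg0 : constantCoeff g = 0)
    (hg1 : coeff 1 g ≠ 0) : ∃ u : K⟦X⟧ˣ, g = X * (u : K⟦X⟧) := by
  obtain ⟨u, rfl⟩ := X_dvd_iff.mpr hg0
  refine ⟨(isUnit_iff_constantCoeff.mpr (IsUnit.mk0 (constantCoeff u) ?_)).unit, rfl⟩
  simpa using hg1

end PowerSeries

namespace LaurentSeries

variable {K : Type*} [Field K]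

theorem coe_unit_zpow (u : K⟦X⟧ˣ) (n : ℤ) :
    ((u : K⟦X⟧) : K⸨X⸩) ^ n = ((u ^ n : K⟦X⟧ˣ) : K⟦X⟧) := by
  have h := map_zpow (Units.map (HahnSeries.ofPowerSeries ℤ K).toMonoidHom) u n
  rw [Units.ext_iff, Units.val_zpow_eq_zpow_val] at h
  exact h.symm

theorem coe_X_mul_zpow (u : K⟦X⟧ˣ) (n : ℤ) :
    ((X * (u : K⟦X⟧) : K⟦X⟧) : K⸨X⸩) ^ n = single n (1 : K) * ((u ^ n : K⟦X⟧ˣ) : K⟦X⟧) := by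
  rw [coe_mul, coe_X, mul_zpow, ← RatFunc.single_zpow, coe_unit_zpow]

theorem coeff_neg_one_zpow_mul_derivative [CharZero K] {g : K⟦X⟧}
    (hg0 : constantCoeff g = 0) (hg1 : coeff 1 g ≠ 0) (n : ℤ) :
    ((g : K⸨X⸩) ^ n * (d⁄dX K g : K⸨X⸩)).coeff (-1) = if n = -1 then 1 else 0 := by
  obtain ⟨u, rfl⟩ := exists_unit_eq_X_mul hg0 hg1
  rw [coe_X_mul_zpow, mul_assoc, ← coe_mul]
  cases n with
  | ofNat k =>
    rw [Int.ofNat_eq_natCast, if_neg (by omega), show (-1 : ℤ) = (-1 - k) + k by ring,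
      coeff_single_mul_add, coeff_coe, if_pos (by omega), mul_zero]
  | negSucc k =>
    rw [show (-1 : ℤ) = k + Int.negSucc k by omega, coeff_single_mul_add, coeff_coe,
      if_neg (by omega), Int.natAbs_natCast, zpow_negSucc, ← inv_pow, Units.val_pow_eq_pow_val,
      coeff_pow_succ_mul_derivative_X_mul u.inv_mul, one_mul]
    exact if_congr (by omega) rfl rfl

end LaurentSeries

theorem formal_residue_change_of_variable_general
    (U : Type*) [AddCommGroup U] [Module ℂ U]
    (f : ℤ → U)
    (g : PowerSeries ℂ) (hg0 : PowerSeries.constantCoeff g = 0)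
    (hg1 : PowerSeries.coeff 1 g ≠ 0) :
    f (-1) = ∑ᶠ n : ℤ,
      (((g : LaurentSeries ℂ) ^ n *
        ((PowerSeries.derivative ℂ g : PowerSeries ℂ) : LaurentSeries ℂ)).coeff (-1)) • f n := by
  rw [finsum_eq_single _ (-1) fun n hn => by
      rw [coeff_neg_one_zpow_mul_derivative hg0 hg1, if_neg hn, zero_smul],
    coeff_neg_one_zpow_mul_derivative hg0 hg1, if_pos rfl, one_smul]

/-- Formal change of variable for the formal residue: if `f(z) = ∑ₙ f n • zⁿ` is a Laurent
series with coefficients in a vector space `U` (finitely many negative powers), and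
`g(w) ∈ c·w + w²ℂ⟦w⟧` with `c ≠ 0`, then
`Res_z f(z) dz = Res_w f(g(w)) ∂_w g(w) dw`.
Here the left-hand residue is `f (-1)` (the coefficient of `z⁻¹`), and the right-hand
residue is computed coefficientwise: the contribution of `f n • zⁿ` is the coefficient
of `w⁻¹` in `g(w)ⁿ · g'(w)` times `f n`. -/
theorem formal_residue_change_of_variable
    (U : Type*) [AddCommGroup U] [Module ℂ U]
    (f : ℤ → U) (hf : ∃ N : ℤ, ∀ n < N, f n = 0)
    (g : PowerSeries ℂ) (hg0 : PowerSeries.constantCoeff g = 0)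
    (hg1 : PowerSeries.coeff 1 g ≠ 0) :
    f (-1) = ∑ᶠ n : ℤ,
      (((g : LaurentSeries ℂ) ^ n *
        ((PowerSeries.derivative ℂ g : PowerSeries ℂ) : LaurentSeries ℂ)).coeff (-1)) • f n :=
  formal_residue_change_of_variable_general U f g hg0 hg1
end

section
/- Let A be a finite-dimensional simple superalgebra with irreducible module N, and h an automorphism of A. Then there exists an invertible ℂ-linear map ι : N → N such that h(a)·x = ι^{-1}·a·ι·x for all a ∈ A, x ∈ N. If A ≅ End(ℂ^{m|k}), then ι is ℤ/2ℤ-homogeneous and unique up to a nonzero scalar factor. -/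
/-!
The Jacobson radical of `A` is a two-sided ideal stable under every automorphism, in particular
under the parity `σA`, so graded simplicity kills it and the Artinian ring `A` is semisimple.
Likewise the annihilator of `N` is a graded ideal, so `N` is faithful. Over a semisimple ring
every module is projective, hence there is a nonzero `h⁻¹`-semilinear map `φ : N → N`.
Either its even part `φ + σN ∘ φ ∘ σN` is nonzero, or `φ` is odd; in both cases we get a nonzero
homogeneous map, whose kernel and image are graded submodules, so it is bijective by the
irreducibility of `N` (graded Schur lemma). This map is `ι`. If the commutant of `A` consists of
scalars, then `ι' ∘ ι⁻¹` lies in it for every other intertwiner `ι'`.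
-/

namespace Superalgebra

variable {A B : Type*} [Ring A] [Ring B] {M M' : Type*} [AddCommGroup M] [Module A M]
  [AddCommGroup M'] [Module B M']

/-- For the parity involution `σA`, the `σA`-stable ideals are exactly the graded ones. -/
def IsGradedSimpleRing (σA : A → A) : Prop :=
  ∀ I : TwoSidedIdeal A, (∀ a ∈ I, σA a ∈ I) → I = ⊥ ∨ I = ⊤

variable (A) in
def IsGradedIrreducible (σ : M → M) : Prop :=
  ∀ W : Submodule A M, (∀ x ∈ W, σ x ∈ W) → W = ⊥ ∨ W = ⊤

theorem IsGradedSimpleRing.eq_bot_or_eq_top {σA : A → A} (hA : IsGradedSimpleRing σA)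
    (I : Ideal A) [I.IsTwoSided] (hI : ∀ a ∈ I, σA a ∈ I) : I = ⊥ ∨ I = ⊤ := by
  refine (hA I.toTwoSided fun a ha => ?_).imp (fun h => ?_) fun h => ?_
  · simpa using hI a (by simpa using ha)
  · ext a; simpa using congr(a ∈ $h)
  · ext a; simpa using congr(a ∈ $h)

theorem IsGradedSimpleRing.isSemisimpleRing [IsArtinianRing A] {σA : A ≃+* A}
    (hA : IsGradedSimpleRing σA) : IsSemisimpleRing A := by
  cases subsingleton_or_nontrivial A
  · infer_instance
  rw [IsArtinianRing.isSemisimpleRing_iff_jacobson]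
  exact (hA.eq_bot_or_eq_top (Ring.jacobson A) fun a ha =>
    Ring.le_comap_jacobson (σA : A →+* A) ha).resolve_right (Module.jacobson_lt_top A A).ne

theorem IsGradedSimpleRing.faithfulSMul [Nontrivial M] {σA : A → A}
    (hA : IsGradedSimpleRing σA) (σ : M →+ M) (hσ2 : ∀ x, σ (σ x) = x)
    (hσ : ∀ (a : A) x, σ (a • x) = σA a • σ x) : FaithfulSMul A M := by
  rw [← Module.annihilator_eq_bot]
  refine (hA.eq_bot_or_eq_top _ fun a ha => ?_).resolve_right fun h => ?_
  · rw [Module.mem_annihilator] at ha ⊢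
    intro x
    rw [← hσ2 x, ← hσ, ha, map_zero]
  · obtain ⟨x, hx⟩ := exists_ne (0 : M)
    have h1 : (1 : A) ∈ Module.annihilator A M := h ▸ Submodule.mem_top
    exact hx (by simpa using Module.mem_annihilator.1 h1 x)

theorem exists_semilinearMap_ne_zero [IsSemisimpleRing A] [Nontrivial M] [FaithfulSMul B M']
    {ρ : A →+* B} (hρ : Function.Injective ρ) : ∃ φ : M →ₛₗ[ρ] M', φ ≠ 0 := by
  obtain ⟨x, hx⟩ := exists_ne (0 : M)
  have := Module.projective_of_isSemisimpleRing A M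
  obtain ⟨f, hf⟩ := Module.Projective.exists_dual_ne_zero A hx
  obtain ⟨y, hy⟩ : ∃ y : M', ρ (f x) • y ≠ 0 := by
    by_contra! h
    exact hf ((map_eq_zero_iff ρ hρ).1
      (FaithfulSMul.eq_of_smul_eq_smul fun y => by rw [h y, zero_smul]))
  refine ⟨{ toFun m := ρ (f m) • y, map_add' := ?_, map_smul' := ?_ }, fun h => hy congr($h x)⟩
  · intro m m'; simp only [map_add, add_smul]
  · intro a m; simp only [map_smul, smul_eq_mul, map_mul, mul_smul]

theorem IsGradedIrreducible.neg {σ : M →+ M} (hM : IsGradedIrreducible A σ) :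
    IsGradedIrreducible A ⇑(-σ) := fun W hW =>
  hM W fun x hx => by simpa using W.neg_mem (hW x hx)

theorem IsGradedIrreducible.bijective {ρ : A →+* B} [RingHomSurjective ρ] {σ : M → M}
    {σ' : M' →+ M'} (hM : IsGradedIrreducible A σ) (hM' : IsGradedIrreducible B σ')
    {ψ : M →ₛₗ[ρ] M'} (hψ : ψ ≠ 0) (hcomm : ∀ x, σ' (ψ x) = ψ (σ x)) :
    Function.Bijective ψ := by
  have hker : LinearMap.ker ψ = ⊥ := by
    refine (hM _ fun x hx => ?_).resolve_right fun h => hψ (LinearMap.ker_eq_top.1 h)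
    rw [LinearMap.mem_ker] at hx ⊢
    rw [← hcomm, hx, map_zero]
  have hrange : LinearMap.range ψ = ⊤ := by
    refine (hM' _ ?_).resolve_left fun h => hψ (LinearMap.range_eq_bot.1 h)
    rintro _ ⟨x, rfl⟩
    exact hcomm x ▸ LinearMap.mem_range_self ψ (σ x)
  exact ⟨LinearMap.ker_eq_bot.1 hker, LinearMap.range_eq_top.1 hrange⟩

section GradedConj

variable {σA : A → A} {σB : B → B} {ρ : A →+* B} (hσB : ∀ b, σB (σB b) = b)
  (hρ : ∀ a, ρ (σA a) = σB (ρ a)) {σ : M →+ M} {σ' : M' →+ M'}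
  (hσ : ∀ (a : A) x, σ (a • x) = σA a • σ x) (hσ' : ∀ (b : B) x, σ' (b • x) = σB b • σ' x)
include hσB hρ hσ hσ'

def gradedConj (φ : M →ₛₗ[ρ] M') : M →ₛₗ[ρ] M' where
  toFun x := σ' (φ (σ x))
  map_add' x y := by simp only [map_add]
  map_smul' a x := by simp only [hσ, map_smulₛₗ, hσ', hρ, hσB]

theorem exists_homogeneous_ne_zero (hσ2 : ∀ x, σ (σ x) = x) (hσ'2 : ∀ x, σ' (σ' x) = x)
    {φ : M →ₛₗ[ρ] M'} (hφ : φ ≠ 0) :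
    ∃ ψ : M →ₛₗ[ρ] M', ψ ≠ 0 ∧
      ((∀ x, σ' (ψ x) = ψ (σ x)) ∨ (∀ x, σ' (ψ x) = -ψ (σ x))) := by
  -- If the even part `φ + σ' ∘ φ ∘ σ` vanishes, then `φ` itself is odd.
  by_cases hsum : φ + gradedConj hσB hρ hσ hσ' φ = 0
  · refine ⟨φ, hφ, Or.inr fun x => eq_neg_of_add_eq_zero_left ?_⟩
    simpa [gradedConj, hσ2, add_comm] using congr($hsum (σ x))
  · refine ⟨_, hsum, Or.inl fun x => ?_⟩
    simpa [gradedConj, hσ2, hσ'2] using add_comm _ _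

end GradedConj

def restrictScalarsOfCommutes (R : Type*) [CommSemiring R] [Module R M] [Module R M']
    [Algebra R A] [Algebra R B] [IsScalarTower R A M] [IsScalarTower R B M'] {ρ : A →+* B}
    (hρ : ∀ r, ρ (algebraMap R A r) = algebraMap R B r) (ψ : M →ₛₗ[ρ] M') : M →ₗ[R] M' where
  toFun := ψ
  map_add' := ψ.map_add
  map_smul' r x := by
    rw [← algebraMap_smul A r x, ψ.map_smulₛₗ, hρ, algebraMap_smul, RingHom.id_apply]

theorem exists_eq_smul_of_commutant_eq_scalars {K : Type*} [CommSemiring K] [Module K M]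
    [Nontrivial M]
    (hcomm : ∀ ψ : M →ₗ[K] M, (∀ (a : A) x, ψ (a • x) = a • ψ x) → ∃ c : K, ψ = c • .id)
    {g : A → A} {ι ι' : M ≃ₗ[K] M} (hι : ∀ a x, g a • x = ι.symm (a • ι x))
    (hι' : ∀ a x, g a • x = ι'.symm (a • ι' x)) : ∃ c : K, c ≠ 0 ∧ ∀ x, ι' x = c • ι x := by
  obtain ⟨c, hc⟩ := hcomm (ι'.toLinearMap ∘ₗ ι.symm.toLinearMap) fun a y => by
    obtain ⟨x, rfl⟩ := ι.surjective y
    simp only [LinearMap.comp_apply, LinearEquiv.coe_coe, LinearEquiv.symm_apply_apply]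
    rw [← hι, ι'.eq_symm_apply.1 (hι' a x)]
  have hc' : ∀ x, ι' x = c • ι x := fun x => by simpa using congr($hc (ι x))
  refine ⟨c, fun hc0 => ?_, hc'⟩
  obtain ⟨x, hx⟩ := exists_ne (0 : M)
  exact hx (ι'.map_eq_zero_iff.1 (by simp [hc', hc0]))

end Superalgebra

open Superalgebra

/-- Super Skolem–Noether.  Let `A` be a finite-dimensional simple superalgebra over `ℂ`
(the `ℤ/2`-grading is encoded by the parity involution `σA`, and simplicity means every
graded, i.e. `σA`-invariant, two-sided ideal is trivial) acting irreducibly on a graded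
module `N` (grading encoded by the involution `σN`), and let `h` be an (even) automorphism
of `A`.  Then there is an invertible linear map `ι : N → N` with `h(a)·x = ι⁻¹(a·ι(x))`
for all `a, x`.  Moreover, if `A` is of Type I, i.e. `A ≅ End(ℂ^{m|k})` — encoded here by
the (equivalent) condition that the commutant of the `A`-action on `N` consists of scalars —
then `ι` is `ℤ/2`-homogeneous and unique up to a nonzero scalar factor. -/
theorem super_skolem_noether
    (A : Type*) [Ring A] [Algebra ℂ A] [FiniteDimensional ℂ A]
    (σA : A ≃ₐ[ℂ] A) (hσA2 : ∀ a, σA (σA a) = a)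
    (hsimple : ∀ I : TwoSidedIdeal A, (∀ a ∈ I, σA a ∈ I) → I = ⊥ ∨ I = ⊤)
    (N : Type*) [AddCommGroup N] [Module ℂ N] [Module A N] [IsScalarTower ℂ A N]
    [Nontrivial N]
    (σN : N ≃ₗ[ℂ] N) (hσN2 : ∀ x, σN (σN x) = x)
    (hcompat : ∀ (a : A) (x : N), σN (a • x) = σA a • σN x)
    (hirr : ∀ W : Submodule A N, (∀ x ∈ W, σN x ∈ W) → W = ⊥ ∨ W = ⊤)
    (h : A ≃ₐ[ℂ] A) (hEven : ∀ a, h (σA a) = σA (h a)) :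
    ∃ ι : N ≃ₗ[ℂ] N,
      (∀ (a : A) (x : N), h a • x = ι.symm (a • ι x)) ∧
      ((∀ ψ : N →ₗ[ℂ] N, (∀ (a : A) (x : N), ψ (a • x) = a • ψ x) →
          ∃ c : ℂ, ψ = c • LinearMap.id) →
        ((∀ x, σN (ι x) = ι (σN x)) ∨ (∀ x, σN (ι x) = - ι (σN x))) ∧
        ∀ ι' : N ≃ₗ[ℂ] N, (∀ (a : A) (x : N), h a • x = ι'.symm (a • ι' x)) →
          ∃ c : ℂ, c ≠ 0 ∧ ∀ x, ι' x = c • ι x) := by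
  have : IsArtinianRing A := IsArtinianRing.of_finite ℂ A
  have hA : IsGradedSimpleRing (σA : A ≃+* A) := hsimple
  have : IsSemisimpleRing A := hA.isSemisimpleRing
  have : FaithfulSMul A N := hA.faithfulSMul (σN : N →+ N) hσN2 hcompat
  let ρ : A →+* A := (h.symm : A ≃+* A)
  have hρ : ∀ a, ρ (σA a) = σA (ρ a) := fun a => by
    simpa [ρ] using congr(h.symm $(hEven (h.symm a))).symm
  obtain ⟨φ, hφ⟩ := exists_semilinearMap_ne_zero (M := N) (M' := N) (ρ := ρ) h.symm.injective
  obtain ⟨ψ, hψ, hhom⟩ := exists_homogeneous_ne_zero hσA2 hρ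
    (σ := (σN : N →+ N)) (σ' := (σN : N →+ N)) hcompat hcompat hσN2 hσN2 hφ
  have hN : IsGradedIrreducible A (σN : N →+ N) := hirr
  have hbij : Function.Bijective ψ := by
    rcases hhom with heven | hodd
    · exact hN.bijective hN hψ heven
    · exact hN.bijective hN.neg hψ fun x => by simp [hodd]
  let ι : N ≃ₗ[ℂ] N := .ofBijective (restrictScalarsOfCommutes ℂ h.symm.commutes ψ) hbij
  have hψh : ∀ (a : A) x, ψ (h a • x) = a • ψ x := fun a x => by
    rw [ψ.map_smulₛₗ]; simp [ρ]
  have hι : ∀ (a : A) (x : N), h a • x = ι.symm (a • ι x) := fun a x =>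
    (ι.symm_apply_eq.2 (hψh a x).symm).symm
  exact ⟨ι, hι, fun hcomm =>
    ⟨hhom, fun ι' hι' => exists_eq_smul_of_commutant_eq_scalars hcomm hι hι'⟩⟩
end

section
/- Let A be a finite-dimensional simple superalgebra of Type I (A ≅ End(ℂ^{m|k})) with irreducible module N, h an automorphism of A of finite order, and γ : N → N a homogeneous invertible linear map with h(a) = γ^{-1} a γ on N. Then the space of h-supersymmetric functions on A is one dimensional, spanned by a ↦ str_N(a γ σ_N^{p(γ)}), where σ_N is the parity involution of N. -/
/-- The superspace `ℂ^{m|k}`. -/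
abbrev SV (m k : ℕ) := (Fin m → ℂ) × (Fin k → ℂ)

/-- An operator on `ℂ^{m|k}` is homogeneous of parity `p` (`false` even, `true` odd). -/
def IsHomogeneousOp (m k : ℕ) (X : SV m k →ₗ[ℂ] SV m k) (p : Bool) : Prop :=
  if p then
    (LinearMap.fst ℂ _ _ ∘ₗ X ∘ₗ LinearMap.inl ℂ (Fin m → ℂ) (Fin k → ℂ) = 0 ∧
     LinearMap.snd ℂ _ _ ∘ₗ X ∘ₗ LinearMap.inr ℂ (Fin m → ℂ) (Fin k → ℂ) = 0)
  else
    (LinearMap.snd ℂ _ _ ∘ₗ X ∘ₗ LinearMap.inl ℂ (Fin m → ℂ) (Fin k → ℂ) = 0 ∧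
     LinearMap.fst ℂ _ _ ∘ₗ X ∘ₗ LinearMap.inr ℂ (Fin m → ℂ) (Fin k → ℂ) = 0)

/-- The supertrace on `End(ℂ^{m|k})`. -/
noncomputable def supertraceOp (m k : ℕ) (Z : SV m k →ₗ[ℂ] SV m k) : ℂ :=
  LinearMap.trace ℂ (Fin m → ℂ)
      (LinearMap.fst ℂ _ _ ∘ₗ Z ∘ₗ LinearMap.inl ℂ (Fin m → ℂ) (Fin k → ℂ)) -
  LinearMap.trace ℂ (Fin k → ℂ)
      (LinearMap.snd ℂ _ _ ∘ₗ Z ∘ₗ LinearMap.inr ℂ (Fin m → ℂ) (Fin k → ℂ))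

/-- The parity involution `σ_N` of `ℂ^{m|k}`. -/
noncomputable def sigmaN (m k : ℕ) : SV m k →ₗ[ℂ] SV m k :=
  LinearMap.prodMap LinearMap.id (-LinearMap.id)

/-- The automorphism `h(a) = γ⁻¹ a γ` of `End(ℂ^{m|k})` induced by `γ`. -/
noncomputable def hConj (m k : ℕ) (γ : SV m k ≃ₗ[ℂ] SV m k) (a : SV m k →ₗ[ℂ] SV m k) :
    SV m k →ₗ[ℂ] SV m k :=
  γ.symm.toLinearMap ∘ₗ a ∘ₗ γ.toLinearMap

/-- `f` is `h`-supersymmetric: for homogeneous `h`-eigenvectors `a, b` with eigenvalues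
`λ(a), λ(b)`, `f(ab) = δ_{λ(a)λ(b),1} (-1)^{p(a)p(b)} λ(a)⁻¹ f(ba)`. -/
def IsHSupersymmetric (m k : ℕ) (γ : SV m k ≃ₗ[ℂ] SV m k)
    (f : (SV m k →ₗ[ℂ] SV m k) → ℂ) : Prop :=
  ∀ (a b : SV m k →ₗ[ℂ] SV m k) (pa pb : Bool) (la lb : ℂ),
    IsHomogeneousOp m k a pa → IsHomogeneousOp m k b pb →
    hConj m k γ a = la • a → hConj m k γ b = lb • b →
    f (a ∘ₗ b) = (if la * lb = 1 then 1 else 0) *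
      (if pa && pb then (-1 : ℂ) else 1) * la⁻¹ * f (b ∘ₗ a)

/-!
Write `g = γ σ_N^{p(γ)}`. Conjugation `h` by `γ` is multiplicative, multiplies `g` by
`(-1)^{p(γ)}` and changes supertraces by the same sign, so `F(a) = str(a g)` is `h`-invariant.
Hence `F(ab) = 0` for eigenvectors with `λ(a)λ(b) ≠ 1`, while for `λ(a)λ(b) = 1` moving `a`
across `g` and using `str(xy) = (-1)^{p(x)p(y)} str(yx)` gives the required identity. Also
`F(σ_N g⁻¹) = str σ_N = m + k ≠ 0`.

Conversely, if `f` is `h`-supersymmetric then `G(z) = f(z g⁻¹)` satisfies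
`G(xy) = (-1)^{p(x)p(y)} G(yx)` for homogeneous `h`-eigenvectors `x, y`. Since `h^n = 1`, `h` is
semisimple and its eigenvectors span each parity component of `End(N)`, so this holds for all
homogeneous `x, y`. Evaluating on matrix units shows that such a `G` is a multiple of the
supertrace, i.e. `f = c F`.
-/

open Polynomial in
theorem Module.End.mem_span_eigenvectors_of_pow_eq_one {M : Type*} [AddCommGroup M] [Module ℂ M]
    [FiniteDimensional ℂ M] {T : Module.End ℂ M} {n : ℕ} (hn : n ≠ 0) (hT : T ^ n = 1)
    {p : Submodule ℂ M} (hp : p ∈ T.invtSubmodule) {z : M} (hz : z ∈ p) :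
    z ∈ Submodule.span ℂ {x | x ∈ p ∧ ∃ l : ℂ, T x = l • x} := by
  have hsep : (X ^ n - C (1 : ℂ)).Separable := separable_X_pow_sub_C 1 (by simpa) one_ne_zero
  have hss : T.IsSemisimple :=
    isSemisimple_of_squarefree_aeval_eq_zero hsep.squarefree (by simp [hT])
  have hmem : (⟨z, hz⟩ : p) ∈ ⨆ μ, eigenspace (T.restrict hp) μ := by
    rw [(hss.restrict hp).iSup_eigenspace_eq_top]; trivial
  refine Submodule.iSup_induction _ (motive := fun y : p => (y : M) ∈ _) hmem
    (fun μ y hy => Submodule.subset_span ⟨y.2, μ, ?_⟩) (Submodule.zero_mem _)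
    (fun _ _ => Submodule.add_mem _)
  exact congrArg Subtype.val (mem_eigenspace_iff.mp hy)

lemma Module.Basis.end_comp_end {ι R M : Type*} [Fintype ι] [DecidableEq ι] [CommSemiring R]
    [AddCommMonoid M] [Module R M] (b : Basis ι R M) (x y y' z : ι) :
    b.end (x, y) ∘ₗ b.end (y', z) = if y = y' then b.end (x, z) else 0 := by
  refine b.ext fun w => ?_
  by_cases hzw : z = w <;> by_cases hyy : y = y' <;> simp [Basis.end_apply_apply, hzw, hyy]

lemma Module.Basis.trace_end {ι R M : Type*} [Fintype ι] [DecidableEq ι] [CommRing R]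
    [AddCommGroup M] [Module R M] (b : Basis ι R M) (x y : ι) :
    LinearMap.trace R M (b.end (x, y)) = if x = y then 1 else 0 := by
  rw [LinearMap.trace_eq_matrix_trace R b, Basis.end_apply, LinearMap.toMatrix_toLin,
    Matrix.stdBasis_eq_single]
  split_ifs with h
  · subst h; exact Matrix.trace_single_eq_same _ _
  · exact Matrix.trace_single_eq_of_ne _ _ _ h

section SuperSpace

open LinearMap

variable {m k : ℕ}

def paritySign (p : Bool) : ℂ := if p then -1 else 1

@[simp] lemma paritySign_false : paritySign false = 1 := rfl
@[simp] lemma paritySign_true : paritySign true = -1 := rfl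

lemma paritySign_mul_self (p : Bool) : paritySign p * paritySign p = 1 := by
  cases p <;> simp

lemma paritySign_xor (p q : Bool) : paritySign (xor p q) = paritySign p * paritySign q := by
  cases p <;> cases q <;> simp

lemma paritySign_and_xor_mul (p q r : Bool) :
    paritySign (p && xor q r) * paritySign (p && r) = paritySign (p && q) := by
  cases p <;> cases q <;> cases r <;> simp

@[simp] lemma sigmaN_apply (v : SV m k) : sigmaN m k v = (v.1, -v.2) := rfl

lemma sigmaN_comp_sigmaN : sigmaN m k ∘ₗ sigmaN m k = LinearMap.id := by
  ext <;> simp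

lemma isHomogeneousOp_iff {X : SV m k →ₗ[ℂ] SV m k} {p : Bool} :
    IsHomogeneousOp m k X p ↔ sigmaN m k ∘ₗ X = paritySign p • (X ∘ₗ sigmaN m k) := by
  have hX : ∀ a b, X (a, b) = X (a, 0) + X (0, b) := fun a b => by rw [← map_add]; simp
  have hX' : ∀ a b, X (a, -b) = X (a, 0) - X (0, b) := fun a b => by rw [← map_sub]; simp
  cases p <;> simp only [IsHomogeneousOp, LinearMap.ext_iff] <;> simp <;>
    exact ⟨fun ⟨h1, h2⟩ a b => by simp [hX a b, hX' a b, Prod.ext_iff, h1, h2],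
      fun h => ⟨fun a => by simpa [Prod.ext_iff, hX', self_eq_neg, neg_eq_self] using h a 0,
        fun b => by
          simpa [Prod.ext_iff, hX', self_eq_neg, neg_eq_self, Prod.mk_zero_zero] using h 0 b⟩⟩

lemma IsHomogeneousOp.comp {X Y : SV m k →ₗ[ℂ] SV m k} {p q : Bool}
    (hX : IsHomogeneousOp m k X p) (hY : IsHomogeneousOp m k Y q) :
    IsHomogeneousOp m k (X ∘ₗ Y) (xor p q) := by
  rw [isHomogeneousOp_iff] at *
  rw [← comp_assoc, hX, smul_comp, comp_assoc, hY, comp_smul, smul_smul, paritySign_xor,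
    comp_assoc]

lemma isHomogeneousOp_id : IsHomogeneousOp m k LinearMap.id false := by
  simp [isHomogeneousOp_iff]

lemma isHomogeneousOp_sigmaN : IsHomogeneousOp m k (sigmaN m k) false := by
  simp [isHomogeneousOp_iff]

def homogeneousSubmodule (m k : ℕ) (p : Bool) : Submodule ℂ (Module.End ℂ (SV m k)) where
  carrier := {X | IsHomogeneousOp m k X p}
  add_mem' hX hY := by
    simp_all only [Set.mem_ofPred_eq, isHomogeneousOp_iff, comp_add, add_comp, smul_add]
  zero_mem' := by simp [isHomogeneousOp_iff]
  smul_mem' c X hX := by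
    simp_all only [Set.mem_ofPred_eq, isHomogeneousOp_iff, comp_smul, smul_comp, smul_comm c]

lemma IsHomogeneousOp.symm {γ : SV m k ≃ₗ[ℂ] SV m k} {p : Bool}
    (hγ : IsHomogeneousOp m k γ.toLinearMap p) : IsHomogeneousOp m k γ.symm.toLinearMap p := by
  rw [isHomogeneousOp_iff] at *
  refine LinearMap.ext fun v => ?_
  have h := LinearMap.congr_fun hγ (γ.symm v)
  simp only [comp_apply, LinearMap.smul_apply, LinearEquiv.coe_coe,
    LinearEquiv.apply_symm_apply] at h
  cases p <;> simp [h]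

noncomputable def sigmaNPow (m k : ℕ) (p : Bool) : SV m k →ₗ[ℂ] SV m k :=
  if p then sigmaN m k else LinearMap.id

lemma sigmaNPow_comp_sigmaNPow (p : Bool) : sigmaNPow m k p ∘ₗ sigmaNPow m k p = LinearMap.id := by
  cases p <;> simp [sigmaNPow, sigmaN_comp_sigmaN]

@[simp] lemma sigmaNPow_sigmaNPow_apply (p : Bool) (v : SV m k) :
    sigmaNPow m k p (sigmaNPow m k p v) = v :=
  LinearMap.congr_fun (sigmaNPow_comp_sigmaNPow p) v

lemma isHomogeneousOp_sigmaNPow (p : Bool) : IsHomogeneousOp m k (sigmaNPow m k p) false := by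
  cases p
  exacts [isHomogeneousOp_id, isHomogeneousOp_sigmaN]

lemma IsHomogeneousOp.sigmaNPow_comp {X : SV m k →ₗ[ℂ] SV m k} {p : Bool}
    (hX : IsHomogeneousOp m k X p) (q : Bool) :
    sigmaNPow m k q ∘ₗ X = paritySign (p && q) • (X ∘ₗ sigmaNPow m k q) := by
  cases q
  · simp [sigmaNPow]
  · simpa [sigmaNPow] using isHomogeneousOp_iff.mp hX

lemma supertraceOp_eq_trace (Z : SV m k →ₗ[ℂ] SV m k) :
    supertraceOp m k Z = trace ℂ _ (Z ∘ₗ sigmaN m k) := by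
  have hσ : sigmaN m k = inl ℂ _ _ ∘ₗ fst ℂ _ _ - inr ℂ _ _ ∘ₗ snd ℂ _ _ := by ext <;> simp
  rw [hσ, comp_sub, map_sub, ← comp_assoc, ← comp_assoc]
  exact congrArg₂ (· - ·) (trace_comp_comm' _ _) (trace_comp_comm' _ _)

lemma supertraceOp_sigmaN : supertraceOp m k (sigmaN m k) = m + k := by
  simp [supertraceOp_eq_trace, sigmaN_comp_sigmaN]

lemma supertraceOp_smul (c : ℂ) (Z : SV m k →ₗ[ℂ] SV m k) :
    supertraceOp m k (c • Z) = c * supertraceOp m k Z := by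
  rw [supertraceOp_eq_trace, supertraceOp_eq_trace, smul_comp, map_smul, smul_eq_mul]

lemma IsHomogeneousOp.supertraceOp_comp_comm {X : SV m k →ₗ[ℂ] SV m k} {p : Bool}
    (hX : IsHomogeneousOp m k X p) (Y : SV m k →ₗ[ℂ] SV m k) :
    supertraceOp m k (X ∘ₗ Y) = paritySign p * supertraceOp m k (Y ∘ₗ X) := by
  rw [supertraceOp_eq_trace, supertraceOp_eq_trace, comp_assoc, trace_comp_comm', comp_assoc,
    isHomogeneousOp_iff.mp hX, comp_smul, map_smul, smul_eq_mul, comp_assoc]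

lemma supertraceOp_eq_zero_of_odd {Z : SV m k →ₗ[ℂ] SV m k} (hZ : IsHomogeneousOp m k Z true) :
    supertraceOp m k Z = 0 := by
  have h := hZ.supertraceOp_comp_comm LinearMap.id
  rw [comp_id, id_comp, paritySign_true, neg_one_mul, self_eq_neg] at h
  exact h

/-- The case `h = 1` of `IsHSupersymmetric`. -/
def IsSupersymmetric (m k : ℕ) (G : (SV m k →ₗ[ℂ] SV m k) → ℂ) : Prop :=
  ∀ (x y : SV m k →ₗ[ℂ] SV m k) (px py : Bool),
    IsHomogeneousOp m k x px → IsHomogeneousOp m k y py →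
    G (x ∘ₗ y) = paritySign (px && py) * G (y ∘ₗ x)

lemma isSupersymmetric_supertraceOp : IsSupersymmetric m k (supertraceOp m k) := by
  intro x y px py hx hy
  cases px
  · simpa using hx.supertraceOp_comp_comm y
  cases py
  · simp [supertraceOp_eq_zero_of_odd (hx.comp hy), supertraceOp_eq_zero_of_odd (hy.comp hx)]
  · simpa using hx.supertraceOp_comp_comm y

noncomputable def superBasis (m k : ℕ) : Module.Basis (Fin m ⊕ Fin k) ℂ (SV m k) :=
  (Pi.basisFun ℂ (Fin m)).prod (Pi.basisFun ℂ (Fin k))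

def basisParity : Fin m ⊕ Fin k → Bool := Sum.elim (fun _ => false) (fun _ => true)

lemma sigmaN_superBasis (x : Fin m ⊕ Fin k) :
    sigmaN m k (superBasis m k x) = paritySign (basisParity x) • superBasis m k x := by
  cases x <;> ext <;> simp [superBasis, basisParity, sigmaN, paritySign]

lemma sigmaN_comp_superBasis_end (x y : Fin m ⊕ Fin k) :
    sigmaN m k ∘ₗ (superBasis m k).end (x, y) =
      paritySign (basisParity x) • (superBasis m k).end (x, y) := by
  refine (superBasis m k).ext fun w => ?_
  by_cases h : y = w <;> simp [Module.Basis.end_apply_apply, h, sigmaN_superBasis, -sigmaN_apply]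

lemma superBasis_end_comp_sigmaN (x y : Fin m ⊕ Fin k) :
    (superBasis m k).end (x, y) ∘ₗ sigmaN m k =
      paritySign (basisParity y) • (superBasis m k).end (x, y) := by
  refine (superBasis m k).ext fun w => ?_
  by_cases h : y = w <;> simp [Module.Basis.end_apply_apply, h, sigmaN_superBasis, -sigmaN_apply]

lemma isHomogeneousOp_superBasis_end (x y : Fin m ⊕ Fin k) :
    IsHomogeneousOp m k ((superBasis m k).end (x, y)) (xor (basisParity x) (basisParity y)) := by
  rw [isHomogeneousOp_iff, sigmaN_comp_superBasis_end, superBasis_end_comp_sigmaN, smul_smul,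
    paritySign_xor, mul_assoc, paritySign_mul_self, mul_one]

lemma supertraceOp_superBasis_end (x y : Fin m ⊕ Fin k) :
    supertraceOp m k ((superBasis m k).end (x, y)) =
      if x = y then paritySign (basisParity x) else 0 := by
  rw [supertraceOp_eq_trace, superBasis_end_comp_sigmaN, map_smul, Module.Basis.trace_end]
  split_ifs with h <;> simp [h]

lemma IsSupersymmetric.apply_superBasis_end_of_ne {G : (SV m k →ₗ[ℂ] SV m k) →ₗ[ℂ] ℂ}
    (hG : IsSupersymmetric m k G) {x y : Fin m ⊕ Fin k} (hxy : x ≠ y) :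
    G ((superBasis m k).end (x, y)) = 0 := by
  have h := hG _ _ _ _ (isHomogeneousOp_superBasis_end x y) (isHomogeneousOp_superBasis_end y y)
  rwa [Module.Basis.end_comp_end, Module.Basis.end_comp_end, if_pos rfl, if_neg hxy.symm,
    map_zero, mul_zero] at h

lemma IsSupersymmetric.apply_superBasis_end_self {G : (SV m k →ₗ[ℂ] SV m k) →ₗ[ℂ] ℂ}
    (hG : IsSupersymmetric m k G) (x r : Fin m ⊕ Fin k) :
    G ((superBasis m k).end (x, x)) = paritySign (basisParity x) * paritySign (basisParity r) *
      G ((superBasis m k).end (r, r)) := by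
  have h := hG _ _ _ _ (isHomogeneousOp_superBasis_end x r) (isHomogeneousOp_superBasis_end r x)
  rw [Module.Basis.end_comp_end, Module.Basis.end_comp_end, if_pos rfl, if_pos rfl,
    Bool.xor_comm (basisParity r), Bool.and_self, paritySign_xor] at h
  exact h

theorem IsSupersymmetric.exists_eq_mul_supertraceOp (hmk : 0 < m + k)
    {G : (SV m k →ₗ[ℂ] SV m k) →ₗ[ℂ] ℂ} (hG : IsSupersymmetric m k G) :
    ∃ d : ℂ, ∀ z, G z = d * supertraceOp m k z := by
  obtain ⟨r⟩ : Nonempty (Fin m ⊕ Fin k) := by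
    rcases Nat.eq_zero_or_pos m with rfl | hm
    exacts [⟨.inr ⟨0, by omega⟩⟩, ⟨.inl ⟨0, hm⟩⟩]
  let S : (SV m k →ₗ[ℂ] SV m k) →ₗ[ℂ] ℂ := trace ℂ _ ∘ₗ mulRight ℂ (sigmaN m k)
  have hS : ∀ z, S z = supertraceOp m k z := fun z => (supertraceOp_eq_trace z).symm
  have hGS : G = (paritySign (basisParity r) * G ((superBasis m k).end (r, r))) • S := by
    refine (superBasis m k).end.ext fun ⟨x, y⟩ => ?_
    rw [LinearMap.smul_apply, hS, supertraceOp_superBasis_end, smul_eq_mul]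
    split_ifs with h
    · subst h
      rw [hG.apply_superBasis_end_self x r]
      ring
    · rw [hG.apply_superBasis_end_of_ne h, mul_zero]
  exact ⟨_, fun z => by rw [hGS, LinearMap.smul_apply, hS, smul_eq_mul]⟩

noncomputable def hConjLinear (γ : SV m k ≃ₗ[ℂ] SV m k) : Module.End ℂ (Module.End ℂ (SV m k)) :=
  mulLeft ℂ (γ.symm : Module.End ℂ (SV m k)) * mulRight ℂ (γ : Module.End ℂ (SV m k))

lemma hConjLinear_apply (γ : SV m k ≃ₗ[ℂ] SV m k) (a : SV m k →ₗ[ℂ] SV m k) :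
    hConjLinear γ a = hConj m k γ a := rfl

lemma hConjLinear_pow_eq_one {γ : SV m k ≃ₗ[ℂ] SV m k} {n : ℕ} {c : ℂ}
    (hγn : ((γ ^ n : SV m k ≃ₗ[ℂ] SV m k) : SV m k →ₗ[ℂ] SV m k) = c • LinearMap.id) :
    hConjLinear γ ^ n = 1 := by
  have hpow : ∀ e : SV m k ≃ₗ[ℂ] SV m k,
      (e : Module.End ℂ (SV m k)) ^ n = ((e ^ n : SV m k ≃ₗ[ℂ] SV m k) : Module.End ℂ (SV m k)) :=
    fun e => (map_pow LinearEquiv.automorphismGroup.toLinearMapMonoidHom e n).symm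
  rw [hConjLinear, (commute_mulLeft_right _ _).mul_pow, pow_mulLeft, pow_mulRight, hpow, hpow,
    hγn]
  refine LinearMap.ext fun a => LinearMap.ext fun v => ?_
  have h := LinearMap.congr_fun hγn (a v)
  have hs : γ.symm ^ n = (γ ^ n).symm := inv_pow γ n
  simp only [mulLeft_apply, mulRight_apply, Module.End.mul_apply, LinearMap.smul_apply,
    LinearMap.id_apply, LinearEquiv.coe_coe, map_smul, Module.End.one_apply] at h ⊢
  rw [hs, ← map_smul, ← h, LinearEquiv.symm_apply_apply]

section Twisted

variable {γ : SV m k ≃ₗ[ℂ] SV m k} {pγ : Bool}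

lemma hConj_comp (a b : SV m k →ₗ[ℂ] SV m k) :
    hConj m k γ (a ∘ₗ b) = hConj m k γ a ∘ₗ hConj m k γ b := by
  refine LinearMap.ext fun v => ?_
  simp [hConj]

lemma comp_eq_smul_of_hConj_eq {a : SV m k →ₗ[ℂ] SV m k} {l : ℂ} (ha : hConj m k γ a = l • a) :
    a ∘ₗ γ.toLinearMap = l • (γ.toLinearMap ∘ₗ a) := by
  rw [← comp_smul, ← ha]
  refine LinearMap.ext fun v => ?_
  simp [hConj]

lemma symm_comp_eq_smul_of_hConj_eq {a : SV m k →ₗ[ℂ] SV m k} {l : ℂ}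
    (ha : hConj m k γ a = l • a) : γ.symm.toLinearMap ∘ₗ a = l • (a ∘ₗ γ.symm.toLinearMap) := by
  rw [← smul_comp, ← ha]
  refine LinearMap.ext fun v => ?_
  simp [hConj]

lemma IsHomogeneousOp.hConj {a : SV m k →ₗ[ℂ] SV m k} {p : Bool}
    (ha : IsHomogeneousOp m k a p) (hγ : IsHomogeneousOp m k γ.toLinearMap pγ) :
    IsHomogeneousOp m k (hConj m k γ a) p := by
  have h := hγ.symm.comp (ha.comp hγ)
  rwa [Bool.xor_comm p, ← Bool.xor_assoc, Bool.xor_self, Bool.false_xor] at h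

lemma supertraceOp_hConj (hγ : IsHomogeneousOp m k γ.toLinearMap pγ) (Z : SV m k →ₗ[ℂ] SV m k) :
    supertraceOp m k (hConj m k γ Z) = paritySign pγ * supertraceOp m k Z := by
  rw [hConj, hγ.symm.supertraceOp_comp_comm, comp_assoc]
  congr 2
  refine LinearMap.ext fun v => ?_
  simp

noncomputable def twist (γ : SV m k ≃ₗ[ℂ] SV m k) (p : Bool) : SV m k →ₗ[ℂ] SV m k :=
  γ.toLinearMap ∘ₗ sigmaNPow m k p

noncomputable def twistInv (γ : SV m k ≃ₗ[ℂ] SV m k) (p : Bool) : SV m k →ₗ[ℂ] SV m k :=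
  sigmaNPow m k p ∘ₗ γ.symm.toLinearMap

lemma twist_comp_twistInv : twist γ pγ ∘ₗ twistInv γ pγ = LinearMap.id := by
  refine LinearMap.ext fun v => ?_
  simp [twist, twistInv]

lemma twistInv_comp_twist : twistInv γ pγ ∘ₗ twist γ pγ = LinearMap.id := by
  refine LinearMap.ext fun v => ?_
  simp [twist, twistInv]

lemma isHomogeneousOp_twist (hγ : IsHomogeneousOp m k γ.toLinearMap pγ) :
    IsHomogeneousOp m k (twist γ pγ) pγ := by
  simpa [twist] using hγ.comp (isHomogeneousOp_sigmaNPow pγ)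

lemma isHomogeneousOp_twistInv (hγ : IsHomogeneousOp m k γ.toLinearMap pγ) :
    IsHomogeneousOp m k (twistInv γ pγ) pγ := by
  simpa [twistInv] using (isHomogeneousOp_sigmaNPow pγ).comp hγ.symm

lemma hConj_twist (hγ : IsHomogeneousOp m k γ.toLinearMap pγ) :
    hConj m k γ (twist γ pγ) = paritySign pγ • twist γ pγ := by
  have h := hγ.sigmaNPow_comp pγ
  rw [Bool.and_self] at h
  rw [twist, ← h]
  refine LinearMap.ext fun v => ?_
  simp [hConj]

lemma hConj_twistInv (hγ : IsHomogeneousOp m k γ.toLinearMap pγ) :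
    hConj m k γ (twistInv γ pγ) = paritySign pγ • twistInv γ pγ := by
  have h := hγ.symm.sigmaNPow_comp pγ
  rw [Bool.and_self] at h
  conv_rhs => rw [twistInv, h, smul_smul, paritySign_mul_self, one_smul]
  refine LinearMap.ext fun v => ?_
  simp [hConj, twistInv]

lemma twist_comp_of_hConj_eq {a : SV m k →ₗ[ℂ] SV m k} {p : Bool} {l : ℂ}
    (ha : IsHomogeneousOp m k a p) (hla : hConj m k γ a = l • a) :
    l • (twist γ pγ ∘ₗ a) = paritySign (p && pγ) • (a ∘ₗ twist γ pγ) := by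
  rw [twist, comp_assoc, ha.sigmaNPow_comp, comp_smul, smul_smul, ← comp_assoc _ _ a,
    comp_eq_smul_of_hConj_eq hla, smul_comp, smul_smul, mul_comm, comp_assoc]

lemma twistInv_comp_of_hConj_eq {a : SV m k →ₗ[ℂ] SV m k} {p : Bool} {l : ℂ}
    (ha : IsHomogeneousOp m k a p) (hla : hConj m k γ a = l • a) :
    twistInv γ pγ ∘ₗ a = (l * paritySign (p && pγ)) • (a ∘ₗ twistInv γ pγ) := by
  rw [twistInv, comp_assoc, symm_comp_eq_smul_of_hConj_eq hla, comp_smul, ← comp_assoc _ a,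
    ha.sigmaNPow_comp, smul_comp, smul_smul, comp_assoc]

lemma supertraceOp_hConj_comp_twist (hγ : IsHomogeneousOp m k γ.toLinearMap pγ)
    (z : SV m k →ₗ[ℂ] SV m k) :
    supertraceOp m k (hConj m k γ z ∘ₗ twist γ pγ) = supertraceOp m k (z ∘ₗ twist γ pγ) := by
  have h := supertraceOp_hConj hγ (z ∘ₗ twist γ pγ)
  rw [hConj_comp, hConj_twist hγ, comp_smul, supertraceOp_smul] at h
  exact mul_left_cancel₀ (by cases pγ <;> simp) h

theorem isHSupersymmetric_supertraceOp_comp_twist (hγ : IsHomogeneousOp m k γ.toLinearMap pγ) :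
    IsHSupersymmetric m k γ (fun a => supertraceOp m k (a ∘ₗ twist γ pγ)) := by
  intro a b pa pb la lb ha hb hla hlb
  change _ = _ * paritySign (pa && pb) * _ * _
  split_ifs with hab
  · have hla0 : la ≠ 0 := left_ne_zero_of_mul_eq_one hab
    have hga : twist γ pγ ∘ₗ a = (la⁻¹ * paritySign (pa && pγ)) • (a ∘ₗ twist γ pγ) := by
      rw [← smul_smul, ← twist_comp_of_hConj_eq ha hla, smul_smul, inv_mul_cancel₀ hla0, one_smul]
    calc supertraceOp m k ((a ∘ₗ b) ∘ₗ twist γ pγ)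
        = paritySign (pa && xor pb pγ) * supertraceOp m k ((b ∘ₗ twist γ pγ) ∘ₗ a) := by
          rw [comp_assoc]
          exact isSupersymmetric_supertraceOp _ _ _ _ ha (hb.comp (isHomogeneousOp_twist hγ))
      _ = paritySign (pa && xor pb pγ) * paritySign (pa && pγ) * la⁻¹ *
            supertraceOp m k ((b ∘ₗ a) ∘ₗ twist γ pγ) := by
          rw [comp_assoc, hga, comp_smul, supertraceOp_smul, comp_assoc]
          ring
      _ = 1 * paritySign (pa && pb) * la⁻¹ * supertraceOp m k ((b ∘ₗ a) ∘ₗ twist γ pγ) := by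
          rw [paritySign_and_xor_mul, one_mul]
  · have h := supertraceOp_hConj_comp_twist hγ (a ∘ₗ b)
    rw [hConj_comp, hla, hlb, smul_comp, comp_smul, smul_smul, smul_comp, supertraceOp_smul] at h
    have h' : (la * lb - 1) * supertraceOp m k ((a ∘ₗ b) ∘ₗ twist γ pγ) = 0 := by
      linear_combination h
    simpa [sub_eq_zero, hab] using h'

lemma homogeneousSubmodule_mem_invtSubmodule (hγ : IsHomogeneousOp m k γ.toLinearMap pγ)
    (p : Bool) : homogeneousSubmodule m k p ∈ (hConjLinear γ).invtSubmodule :=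
  (Module.End.mem_invtSubmodule _).mpr fun a ha => by
    rw [Submodule.mem_comap, hConjLinear_apply]
    exact ha.hConj hγ

lemma hConj_comp_twistInv (hγ : IsHomogeneousOp m k γ.toLinearMap pγ) {y : SV m k →ₗ[ℂ] SV m k}
    {l : ℂ} (hly : hConj m k γ y = l • y) :
    hConj m k γ (y ∘ₗ twistInv γ pγ) = (l * paritySign pγ) • (y ∘ₗ twistInv γ pγ) := by
  rw [hConj_comp, hly, hConj_twistInv hγ, smul_comp, comp_smul, smul_smul]

section Uniqueness

variable {f : (SV m k →ₗ[ℂ] SV m k) →ₗ[ℂ] ℂ} {x y : SV m k →ₗ[ℂ] SV m k} {px py : Bool}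
  {lx ly : ℂ}

lemma IsHSupersymmetric.apply_comp_comp_twistInv_eq_zero (hf : IsHSupersymmetric m k γ f)
    (hγ : IsHomogeneousOp m k γ.toLinearMap pγ) (hx : IsHomogeneousOp m k x px)
    (hlx : hConj m k γ x = lx • x) (hy : IsHomogeneousOp m k y py) (hly : hConj m k γ y = ly • y)
    (hne : lx * (ly * paritySign pγ) ≠ 1) :
    f ((x ∘ₗ y) ∘ₗ twistInv γ pγ) = 0 := by
  have h := hf x (y ∘ₗ twistInv γ pγ) px _ lx _ hx (hy.comp (isHomogeneousOp_twistInv hγ)) hlx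
    (hConj_comp_twistInv hγ hly)
  rwa [if_neg hne, zero_mul, zero_mul, zero_mul, ← comp_assoc] at h

lemma IsHSupersymmetric.apply_comp_comp_twistInv_eq (hf : IsHSupersymmetric m k γ f)
    (hγ : IsHomogeneousOp m k γ.toLinearMap pγ) (hx : IsHomogeneousOp m k x px)
    (hlx : hConj m k γ x = lx • x) (hy : IsHomogeneousOp m k y py) (hly : hConj m k γ y = ly • y)
    (heq : lx * (ly * paritySign pγ) = 1) :
    f ((x ∘ₗ y) ∘ₗ twistInv γ pγ) = paritySign (px && py) * f ((y ∘ₗ x) ∘ₗ twistInv γ pγ) := by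
  have hlx0 : lx ≠ 0 := left_ne_zero_of_mul_eq_one heq
  have h := hf x (y ∘ₗ twistInv γ pγ) px _ lx _ hx (hy.comp (isHomogeneousOp_twistInv hγ)) hlx
    (hConj_comp_twistInv hγ hly)
  rw [if_pos heq, one_mul, comp_assoc, twistInv_comp_of_hConj_eq hx hlx, comp_smul, map_smul,
    smul_eq_mul, ← comp_assoc] at h
  change _ = paritySign (px && xor py pγ) * _ * _ at h
  rw [h, ← paritySign_and_xor_mul px py pγ, comp_assoc]
  field_simp

theorem IsHSupersymmetric.isSupersymmetric_comp_twistInv (hf : IsHSupersymmetric m k γ f)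
    (hγ : IsHomogeneousOp m k γ.toLinearMap pγ) {n : ℕ} {c : ℂ} (hn : 0 < n)
    (hγn : ((γ ^ n : SV m k ≃ₗ[ℂ] SV m k) : SV m k →ₗ[ℂ] SV m k) = c • LinearMap.id) :
    IsSupersymmetric m k (fun z => f (z ∘ₗ twistInv γ pγ)) := by
  have hspan : ∀ {z : SV m k →ₗ[ℂ] SV m k} {p : Bool}, IsHomogeneousOp m k z p →
      z ∈ Submodule.span ℂ
        {w | w ∈ homogeneousSubmodule m k p ∧ ∃ l : ℂ, hConjLinear γ w = l • w} :=
    fun {_} {p} hz => Module.End.mem_span_eigenvectors_of_pow_eq_one hn.ne'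
      (hConjLinear_pow_eq_one hγn) (homogeneousSubmodule_mem_invtSubmodule hγ p) hz
  intro x y px py hx hy
  dsimp only
  have hxs := hspan hx
  have hys := hspan hy
  clear hx hy
  induction hxs using Submodule.span_induction with
  | mem x hx =>
    obtain ⟨hx, lx, hlx⟩ := hx
    rw [hConjLinear_apply] at hlx
    induction hys using Submodule.span_induction with
    | mem y hy =>
      obtain ⟨hy, ly, hly⟩ := hy
      rw [hConjLinear_apply] at hly
      by_cases heq : lx * (ly * paritySign pγ) = 1
      · exact hf.apply_comp_comp_twistInv_eq hγ hx hlx hy hly heq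
      · rw [hf.apply_comp_comp_twistInv_eq_zero hγ hx hlx hy hly heq,
          hf.apply_comp_comp_twistInv_eq_zero hγ hy hly hx hlx (by rwa [mul_left_comm]),
          mul_zero]
    | zero => simp
    | add y y' _ _ h h' => simp only [comp_add, add_comp, map_add, h, h', mul_add]
    | smul a y _ h => simp only [comp_smul, smul_comp, map_smul, h, smul_eq_mul, mul_left_comm]
  | zero => simp
  | add x x' _ _ h h' => simp only [comp_add, add_comp, map_add, h, h', mul_add]
  | smul a x _ h => simp only [comp_smul, smul_comp, map_smul, h, smul_eq_mul, mul_left_comm]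

end Uniqueness

end Twisted

end SuperSpace

/-- For the Type I simple superalgebra `A = End(ℂ^{m|k})` with irreducible module
`N = ℂ^{m|k}`, a finite-order automorphism `h = (γ⁻¹ · γ)` implemented by a homogeneous
invertible `γ`, the space of `h`-supersymmetric functions on `A` is one dimensional,
spanned by the (nonzero, `h`-supersymmetric) function `a ↦ str_N(a γ σ_N^{p(γ)})`. -/
theorem hsupersymmetric_functions_typeI (m k : ℕ) (hmk : 0 < m + k)
    (γ : SV m k ≃ₗ[ℂ] SV m k) (pγ : Bool)
    (hγhom : IsHomogeneousOp m k γ.toLinearMap pγ)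
    (hord : ∃ (n : ℕ) (c : ℂ), 0 < n ∧
      ((γ ^ n : SV m k ≃ₗ[ℂ] SV m k) : SV m k →ₗ[ℂ] SV m k) = c • LinearMap.id) :
    (∃ a : SV m k →ₗ[ℂ] SV m k,
      supertraceOp m k (a ∘ₗ γ.toLinearMap ∘ₗ (if pγ then sigmaN m k else LinearMap.id)) ≠ 0) ∧
    IsHSupersymmetric m k γ (fun a =>
      supertraceOp m k (a ∘ₗ γ.toLinearMap ∘ₗ (if pγ then sigmaN m k else LinearMap.id))) ∧
    ∀ f : (SV m k →ₗ[ℂ] SV m k) →ₗ[ℂ] ℂ, IsHSupersymmetric m k γ (fun a => f a) →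
      ∃ c : ℂ, ∀ a, f a = c *
        supertraceOp m k (a ∘ₗ γ.toLinearMap ∘ₗ (if pγ then sigmaN m k else LinearMap.id)) := by
  obtain ⟨n, c, hn, hγn⟩ := hord
  refine ⟨⟨sigmaN m k ∘ₗ twistInv γ pγ, ?_⟩, isHSupersymmetric_supertraceOp_comp_twist hγhom,
    fun f hf => ?_⟩
  · change supertraceOp m k ((sigmaN m k ∘ₗ twistInv γ pγ) ∘ₗ twist γ pγ) ≠ 0
    rw [LinearMap.comp_assoc, twistInv_comp_twist, LinearMap.comp_id, supertraceOp_sigmaN]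
    exact_mod_cast hmk.ne'
  · obtain ⟨d, hd⟩ := IsSupersymmetric.exists_eq_mul_supertraceOp hmk
      (G := f ∘ₗ LinearMap.mulRight ℂ (twistInv γ pγ))
      (hf.isSupersymmetric_comp_twistInv hγhom hn hγn)
    refine ⟨d, fun a => ?_⟩
    rw [← hd]
    change f a = f ((a ∘ₗ twist γ pγ) ∘ₗ twistInv γ pγ)
    rw [LinearMap.comp_assoc, twist_comp_twistInv, LinearMap.comp_id]
end

section
/- Let f : A → ℂ be h-supersymmetric on a superalgebra A with finite-order automorphism h, let γ be an invertible even element of A with λ(γ) = 1 such that conjugation by γ implements h (i.e. γ^{-1} a γ = h(a)). Define f̄(a) = f(a γ^{-1}). Then f̄ satisfies f̄(ab) = δ_{λ(a)λ(b),1} (−1)^{p(a)p(b)} f̄(ba) for all h-eigenvectors a, b ∈ A. -/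
/-!
Write `f̄(x) = f(x γ⁻¹)`. Since `γ⁻¹` is even and fixed by `h`, the element `b γ⁻¹` is again a
homogeneous `h`-eigenvector with the parity and eigenvalue of `b`, so `h`-supersymmetry applies to
the pair `a, b γ⁻¹`. Moving `γ⁻¹` back past `a` costs `γ⁻¹ a = h(a) γ⁻¹ = λ(a) a γ⁻¹`, and this
factor `λ(a)` cancels the `λ(a)⁻¹` of the supersymmetry relation.
-/

lemma map_units_inv_eq_of_map_eq {F M : Type*} [Monoid M] [FunLike F M M] [MonoidHomClass F M M]
    (f : F) (u : Mˣ) (hu : f u = u) : f ↑u⁻¹ = ↑u⁻¹ :=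
  Units.eq_inv_of_mul_eq_one_left <| by rw [← hu, ← map_mul, Units.mul_inv, map_one]

lemma eigenvalue_ne_zero_of_algEquiv {R A : Type*} [CommSemiring R] [Semiring A] [Algebra R A]
    (e : A ≃ₐ[R] A) {a : A} {l : R} (ha : a ≠ 0) (hl : e a = l • a) : l ≠ 0 := by
  rintro rfl
  exact ha (e.injective (by rw [hl, zero_smul, map_zero]))

lemma map_mul_eq_parity_of_map_eq {R A : Type*} [CommSemiring R] [Ring A] [Algebra R A]
    (σ : A ≃ₐ[R] A) {a c : A} (p : Bool) (ha : σ a = if p then -a else a) (hc : σ c = c) :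
    σ (a * c) = if p then -(a * c) else a * c := by
  rw [map_mul, ha, hc]
  cases p <;> simp only [Bool.false_eq_true, if_true, if_false, neg_mul]

lemma map_mul_eq_smul_of_map_eq {R A : Type*} [CommSemiring R] [Semiring A] [Algebra R A]
    (e : A ≃ₐ[R] A) {b c : A} {l : R} (hb : e b = l • b) (hc : e c = c) :
    e (b * c) = l • (b * c) := by
  rw [map_mul, hb, hc, smul_mul_assoc]

theorem hsupersymmetric_twist_by_gamma_general
    (A : Type*) [Ring A] [Algebra ℂ A]
    (σA : A ≃ₐ[ℂ] A)
    (h : A ≃ₐ[ℂ] A)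
    (γ : Aˣ) (hγeven : σA (γ : A) = (γ : A))
    (hconj : ∀ a : A, (↑γ⁻¹ : A) * a * (γ : A) = h a)
    (f : A →ₗ[ℂ] ℂ)
    (hf : ∀ (a b : A) (pa pb : Bool) (la lb : ℂ),
      σA a = (if pa then -a else a) → σA b = (if pb then -b else b) →
      h a = la • a → h b = lb • b →
      f (a * b) = (if la * lb = 1 then 1 else 0) *
        (if pa && pb then (-1 : ℂ) else 1) * la⁻¹ * f (b * a)) :
    ∀ (a b : A) (pa pb : Bool) (la lb : ℂ),
      σA a = (if pa then -a else a) → σA b = (if pb then -b else b) →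
      h a = la • a → h b = lb • b →
      f (a * b * (↑γ⁻¹ : A)) = (if la * lb = 1 then 1 else 0) *
        (if pa && pb then (-1 : ℂ) else 1) * f (b * a * (↑γ⁻¹ : A)) := by
  intro a b pa pb la lb hpa hpb hla hlb
  rcases eq_or_ne a 0 with rfl | ha
  · simp
  have hγ_fixed : h ↑γ⁻¹ = ↑γ⁻¹ := by simpa using (hconj ↑γ⁻¹).symm
  have hγ_even : σA ↑γ⁻¹ = ↑γ⁻¹ := map_units_inv_eq_of_map_eq σA γ hγeven
  have hγ_swap : ↑γ⁻¹ * a = la • (a * ↑γ⁻¹) := by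
    rw [← smul_mul_assoc, ← hla, ← hconj, Units.mul_inv_cancel_right]
  have hsusy := hf a (b * ↑γ⁻¹) pa pb la lb hpa (map_mul_eq_parity_of_map_eq σA pb hpb hγ_even)
    hla (map_mul_eq_smul_of_map_eq h hlb hγ_fixed)
  rw [← mul_assoc, mul_assoc b, hγ_swap, mul_smul_comm, map_smul, smul_eq_mul,
    ← mul_assoc b] at hsusy
  rw [hsusy, mul_assoc _ la⁻¹, inv_mul_cancel_left₀ (eigenvalue_ne_zero_of_algEquiv h ha hla)]

/-- Let `A` be a superalgebra (grading encoded by the parity involution `σA`) with a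
finite-order automorphism `h`, implemented by conjugation by an invertible even element
`γ` fixed by `h` (so `λ(γ) = 1`): `γ⁻¹ a γ = h(a)`.  If `f : A → ℂ` is `h`-supersymmetric,
then `f̄(a) := f(a γ⁻¹)` satisfies `f̄(ab) = δ_{λ(a)λ(b),1} (-1)^{p(a)p(b)} f̄(ba)` for all
homogeneous `h`-eigenvectors `a, b`. -/
theorem hsupersymmetric_twist_by_gamma
    (A : Type*) [Ring A] [Algebra ℂ A]
    (σA : A ≃ₐ[ℂ] A) (hσA2 : ∀ a, σA (σA a) = a)
    (h : A ≃ₐ[ℂ] A) (hEven : ∀ a, h (σA a) = σA (h a))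
    (hOrd : ∃ N : ℕ, 0 < N ∧ ∀ a, (h ^ N) a = a)
    (γ : Aˣ) (hγeven : σA (γ : A) = (γ : A)) (hγfix : h (γ : A) = (γ : A))
    (hconj : ∀ a : A, (↑γ⁻¹ : A) * a * (γ : A) = h a)
    (f : A →ₗ[ℂ] ℂ)
    (hf : ∀ (a b : A) (pa pb : Bool) (la lb : ℂ),
      σA a = (if pa then -a else a) → σA b = (if pb then -b else b) →
      h a = la • a → h b = lb • b →
      f (a * b) = (if la * lb = 1 then 1 else 0) *
        (if pa && pb then (-1 : ℂ) else 1) * la⁻¹ * f (b * a)) :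
    ∀ (a b : A) (pa pb : Bool) (la lb : ℂ),
      σA a = (if pa then -a else a) → σA b = (if pb then -b else b) →
      h a = la • a → h b = lb • b →
      f (a * b * (↑γ⁻¹ : A)) = (if la * lb = 1 then 1 else 0) *
        (if pa && pb then (-1 : ℂ) else 1) * f (b * a * (↑γ⁻¹ : A)) :=
  hsupersymmetric_twist_by_gamma_general A σA h γ hγeven hconj f hf
end
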